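/- Backward slicing is consistent with forward slicing: if e ⇒ v and v' ⊑ v, then v' ⊑ fwd_e(bwd_e(v')), where fwd_e is the forward-slicing function on ↓e and bwd_e is the backward-slicing function defined by structural recursion on e. -/
import Mathlib


/-- Partial expressions of the simple language, with holes. -/
inductive Expr where
  | hole : Expr
  | num : ℕ → Expr
  | add : Expr → Expr → Expr
  | pair : Expr → Expr → Expr
  | fst : Expr → Expr
  | snd : Expr → Expr
deriving DecidableEq

/-- The prefix relation ⊑ on partial expressions. -/
inductive Sq : Expr → Expr → Prop where
  | hole : ∀ e, Sq Expr.hole e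
  | num : ∀ n, Sq (Expr.num n) (Expr.num n)
  | add : ∀ {a a' b b'}, Sq a a' → Sq b b' → Sq (Expr.add a b) (Expr.add a' b')
  | pair : ∀ {a a' b b'}, Sq a a' → Sq b b' → Sq (Expr.pair a b) (Expr.pair a' b')
  | fst : ∀ {a a'}, Sq a a' → Sq (Expr.fst a) (Expr.fst a')
  | snd : ∀ {a a'}, Sq a a' → Sq (Expr.snd a) (Expr.snd a')

/-- Partial values, with holes. -/
inductive Val where
  | hole : Val
  | num : ℕ → Val
  | pair : Val → Val → Val
deriving DecidableEq

/-- The prefix relation ⊑ on partial values. -/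
inductive VSq : Val → Val → Prop where
  | hole : ∀ v, VSq Val.hole v
  | num : ∀ n, VSq (Val.num n) (Val.num n)
  | pair : ∀ {a a' b b'}, VSq a a' → VSq b b' → VSq (Val.pair a b) (Val.pair a' b')

/-- Big-step evaluation. -/
inductive Eval : Expr → Val → Prop where
  | num : ∀ n, Eval (Expr.num n) (Val.num n)
  | add : ∀ {a b n m}, Eval a (Val.num n) → Eval b (Val.num m) →
      Eval (Expr.add a b) (Val.num (n + m))
  | pair : ∀ {a b va vb}, Eval a va → Eval b vb →
      Eval (Expr.pair a b) (Val.pair va vb)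
  | fst : ∀ {a v₁ v₂}, Eval a (Val.pair v₁ v₂) → Eval (Expr.fst a) v₁
  | snd : ∀ {a v₁ v₂}, Eval a (Val.pair v₁ v₂) → Eval (Expr.snd a) v₂

/-- Forward slicing: evaluation extended with hole propagation. -/
inductive Fwd : Expr → Val → Prop where
  | hole : Fwd Expr.hole Val.hole
  | num : ∀ n, Fwd (Expr.num n) (Val.num n)
  | add : ∀ {a b n m}, Fwd a (Val.num n) → Fwd b (Val.num m) →
      Fwd (Expr.add a b) (Val.num (n + m))
  | addHoleL : ∀ {a b}, Fwd a Val.hole → Fwd (Expr.add a b) Val.hole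
  | addHoleR : ∀ {a b v}, Fwd a v → Fwd b Val.hole → Fwd (Expr.add a b) Val.hole
  | pair : ∀ {a b va vb}, Fwd a va → Fwd b vb →
      Fwd (Expr.pair a b) (Val.pair va vb)
  | fst : ∀ {a v₁ v₂}, Fwd a (Val.pair v₁ v₂) → Fwd (Expr.fst a) v₁
  | fstHole : ∀ {a}, Fwd a Val.hole → Fwd (Expr.fst a) Val.hole
  | snd : ∀ {a v₁ v₂}, Fwd a (Val.pair v₁ v₂) → Fwd (Expr.snd a) v₂
  | sndHole : ∀ {a}, Fwd a Val.hole → Fwd (Expr.snd a) Val.hole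

/-- Forward slicing as a total function (returns hole when stuck). -/
def fwdF : Expr → Val
  | Expr.hole => Val.hole
  | Expr.num n => Val.num n
  | Expr.add a b =>
    match fwdF a, fwdF b with
    | Val.num n, Val.num m => Val.num (n + m)
    | _, _ => Val.hole
  | Expr.pair a b => Val.pair (fwdF a) (fwdF b)
  | Expr.fst a =>
    match fwdF a with
    | Val.pair v _ => v
    | _ => Val.hole
  | Expr.snd a =>
    match fwdF a with
    | Val.pair _ v => v
    | _ => Val.hole

/-- Backward slicing, by structural recursion on the original expression. -/
def bwd : Expr → Val → Expr
  | _, Val.hole => Expr.hole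
  | Expr.num n, _ => Expr.num n
  | Expr.pair a b, Val.pair va vb => Expr.pair (bwd a va) (bwd b vb)
  | Expr.fst a, v => Expr.fst (bwd a (Val.pair v Val.hole))
  | Expr.snd a, v => Expr.snd (bwd a (Val.pair Val.hole v))
  | Expr.add a b, _ => Expr.add (bwd a (fwdF a)) (bwd b (fwdF b))
  | _, _ => Expr.hole

lemma eval_fwd {e v} (h : Eval e v) : fwdF e = v := by
  induction h <;> simp_all [fwdF]

lemma vsq_hole {v} (h : VSq v Val.hole) : v = Val.hole := by cases h; rfl

lemma vsq_num {n v} (h : VSq (Val.num n) v) : v = Val.num n := by cases h; rfl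

lemma key : ∀ e v', VSq v' (fwdF e) → VSq v' (fwdF (bwd e v')) := by
  intro e
  induction e with
  | hole =>
    intro v' h
    simp only [fwdF] at h
    rw [vsq_hole h]
    exact VSq.hole _
  | num n =>
    intro v' h
    simp only [fwdF] at h
    cases h with
    | hole => exact VSq.hole _
    | num => exact VSq.num n
  | add a b ih1 ih2 =>
    intro v' h
    cases v' with
    | hole => exact VSq.hole _
    | pair x y =>
      rcases ha : fwdF a with _ | n | ⟨v1, v2⟩ <;> rcases hb : fwdF b with _ | m | ⟨w1, w2⟩ <;>
        simp only [fwdF, ha, hb] at h <;> cases h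
    | num k =>
      rcases ha : fwdF a with _ | n | ⟨v1, v2⟩ <;> rcases hb : fwdF b with _ | m | ⟨w1, w2⟩ <;>
        simp only [fwdF, ha, hb] at h <;> cases h
      have h1 := ih1 (Val.num n) (by rw [ha]; exact VSq.num n)
      have h2 := ih2 (Val.num m) (by rw [hb]; exact VSq.num m)
      simp only [bwd, ha, hb, fwdF, vsq_num h1, vsq_num h2]
      exact VSq.num _
  | pair a b ih1 ih2 =>
    intro v' h
    simp only [fwdF] at h
    cases h with
    | hole => exact VSq.hole _
    | pair h1 h2 => exact VSq.pair (ih1 _ h1) (ih2 _ h2)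
  | fst a ih =>
    intro v' h
    cases v' with
    | hole => exact VSq.hole _
    | num k =>
      rcases ha : fwdF a with _ | n | ⟨v1, v2⟩ <;> simp only [fwdF, ha] at h
      · exact absurd (vsq_hole h) (by simp)
      · exact absurd (vsq_hole h) (by simp)
      · have := ih (Val.pair (Val.num k) Val.hole)
          (by rw [ha]; exact VSq.pair h (VSq.hole _))
        rcases hx : fwdF (bwd a (Val.pair (Val.num k) Val.hole)) with _ | p | ⟨w1, w2⟩ <;>
          rw [hx] at this <;> cases this
        simp only [bwd, fwdF, hx]
        assumption
    | pair x y =>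
      rcases ha : fwdF a with _ | n | ⟨v1, v2⟩ <;> simp only [fwdF, ha] at h
      · exact absurd (vsq_hole h) (by simp)
      · exact absurd (vsq_hole h) (by simp)
      · have := ih (Val.pair (Val.pair x y) Val.hole)
          (by rw [ha]; exact VSq.pair h (VSq.hole _))
        rcases hx : fwdF (bwd a (Val.pair (Val.pair x y) Val.hole)) with _ | p | ⟨w1, w2⟩ <;>
          rw [hx] at this <;> cases this
        simp only [bwd, fwdF, hx]
        assumption
  | snd a ih =>
    intro v' h
    cases v' with
    | hole => exact VSq.hole _
    | num k =>
      rcases ha : fwdF a with _ | n | ⟨v1, v2⟩ <;> simp only [fwdF, ha] at h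
      · exact absurd (vsq_hole h) (by simp)
      · exact absurd (vsq_hole h) (by simp)
      · have := ih (Val.pair Val.hole (Val.num k))
          (by rw [ha]; exact VSq.pair (VSq.hole _) h)
        rcases hx : fwdF (bwd a (Val.pair Val.hole (Val.num k))) with _ | p | ⟨w1, w2⟩ <;>
          rw [hx] at this <;> cases this
        simp only [bwd, fwdF, hx]
        assumption
    | pair x y =>
      rcases ha : fwdF a with _ | n | ⟨v1, v2⟩ <;> simp only [fwdF, ha] at h
      · exact absurd (vsq_hole h) (by simp)
      · exact absurd (vsq_hole h) (by simp)
      · have := ih (Val.pair Val.hole (Val.pair x y))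
          (by rw [ha]; exact VSq.pair (VSq.hole _) h)
        rcases hx : fwdF (bwd a (Val.pair Val.hole (Val.pair x y))) with _ | p | ⟨w1, w2⟩ <;>
          rw [hx] at this <;> cases this
        simp only [bwd, fwdF, hx]
        assumption

theorem bwd_consistent :
    ∀ e v v', Eval e v → VSq v' v → VSq v' (fwdF (bwd e v')) := by
  intro e v v' he hv
  exact key e v' (by rw [eval_fwd he]; exact hv)
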